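/- Fix σ ∈ 𝕊² and δ ∈ (0,2), and define the cone Ω_δ = {u ∈ ℝ³ \ {0} : (u/|u|)·σ > δ - 1}. Define Φ_σ(u) = (u + |u|σ)/2. Then Φ_σ is a C^∞-diffeomorphism from Ω_δ onto Ω_{δ*} with δ* = 1 + √(δ/2), its Jacobian determinant is J_σ(u) = (1 + (u/|u|)·σ)/8, and its inverse is φ_σ(w) = 2w - (|w|/(ŵ·σ)) σ where ŵ = w/|w|. -/

import Mathlib

open Real Set MeasureTheory RealInnerProductSpace

abbrev E3 := EuclideanSpace ℝ (Fin 3)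

/-- The cone `Ω_δ(σ) = {u ≠ 0 : û·σ > δ - 1}`. -/
def cone (σ : E3) (δ : ℝ) : Set E3 :=
  {u : E3 | u ≠ 0 ∧ ⟪u, σ⟫ / ‖u‖ > δ - 1}

/-- The map `Φ_σ(u) = (u + |u|σ)/2`. -/
noncomputable def PhiMap (σ : E3) (u : E3) : E3 := (1 / 2 : ℝ) • (u + ‖u‖ • σ)

/-- The inverse map `φ_σ(w) = 2w - (|w|/(ŵ·σ))σ`. -/
noncomputable def phiInv (σ : E3) (w : E3) : E3 :=
  (2 : ℝ) • w - (‖w‖ ^ 2 / ⟪w, σ⟫) • σ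

lemma hasFDerivAt_norm' {x : E3} (hx : x ≠ 0) :
    HasFDerivAt (fun y : E3 => ‖y‖) (innerSL ℝ ((‖x‖⁻¹ : ℝ) • x)) x := by
  have h1 : HasFDerivAt (fun y : E3 => ‖y‖ ^ 2) (2 • (innerSL ℝ x)) x :=
    (hasStrictFDerivAt_norm_sq x).hasFDerivAt
  have hx2 : (0:ℝ) < ‖x‖ := norm_pos_iff.2 hx
  have h2 : HasDerivAt Real.sqrt (1 / (2 * Real.sqrt (‖x‖ ^ 2))) (‖x‖ ^ 2) :=
    Real.hasDerivAt_sqrt (by positivity)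
  have h3 := h2.comp_hasFDerivAt x h1
  rw [show Real.sqrt ∘ (fun y : E3 => ‖y‖ ^ 2) = fun y : E3 => ‖y‖ by
    funext y; simp [Real.sqrt_sq (norm_nonneg y)]] at h3
  refine h3.congr_fderiv ?_
  rw [Real.sqrt_sq (norm_nonneg x)]
  ext v
  simp [real_inner_smul_left]
  ring

lemma det_aux (σ n : E3) :
    LinearMap.det ((ContinuousLinearMap.id ℝ E3 +
        (innerSL ℝ n).smulRight σ : E3 →L[ℝ] E3) : E3 →ₗ[ℝ] E3) = 1 + ⟪n, σ⟫ := by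
  set b := (EuclideanSpace.basisFun (Fin 3) ℝ).toBasis
  rw [← LinearMap.det_toMatrix b]
  have hM : LinearMap.toMatrix b b ((ContinuousLinearMap.id ℝ E3 +
        (innerSL ℝ n).smulRight σ : E3 →L[ℝ] E3) : E3 →ₗ[ℝ] E3)
      = 1 + Matrix.replicateCol (Fin 1) (fun i => σ i) * Matrix.replicateRow (Fin 1) (fun j => n j) := by
    ext i j
    rw [LinearMap.toMatrix_apply]
    simp only [b, OrthonormalBasis.coe_toBasis, OrthonormalBasis.coe_toBasis_repr_apply,
      EuclideanSpace.basisFun_repr, EuclideanSpace.basisFun_apply,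
      ContinuousLinearMap.coe_coe, ContinuousLinearMap.add_apply,
      ContinuousLinearMap.coe_id', id_eq, ContinuousLinearMap.smulRight_apply,
      innerSL_apply_apply, Matrix.add_apply, Matrix.one_apply, Matrix.mul_apply,
      Matrix.replicateCol_apply, Matrix.replicateRow_apply, Finset.sum_const, Finset.card_univ,
      Fintype.card_fin, one_smul]
    rw [EuclideanSpace.inner_single_right]
    simp [EuclideanSpace.single_apply, PiLp.smul_apply, PiLp.add_apply, smul_eq_mul]
    rcases eq_or_ne i j with h | h <;> simp [h, eq_comm, mul_comm]
  rw [hM]; refine (Matrix.det_one_add_replicateCol_mul_replicateRow _ _).trans ?_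
  simp [dotProduct, PiLp.inner_apply, RCLike.inner_apply, mul_comm]

lemma hasFDerivAt_PhiMap (σ : E3) {u : E3} (hu : u ≠ 0) :
    HasFDerivAt (PhiMap σ)
      ((1 / 2 : ℝ) • (ContinuousLinearMap.id ℝ E3 +
        (innerSL ℝ ((‖u‖⁻¹ : ℝ) • u)).smulRight σ)) u := by
  have h1 : HasFDerivAt (fun v : E3 => v + ‖v‖ • σ)
      (ContinuousLinearMap.id ℝ E3 + (innerSL ℝ ((‖u‖⁻¹ : ℝ) • u)).smulRight σ) u :=
    (hasFDerivAt_id u).add ((hasFDerivAt_norm' hu).smul_const σ)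
  exact h1.const_smul (1 / 2 : ℝ)

lemma inner_Phi (σ : E3) (hσ : ‖σ‖ = 1) (u : E3) :
    ⟪PhiMap σ u, σ⟫ = (⟪u, σ⟫ + ‖u‖) / 2 := by
  have hσσ : ⟪σ, σ⟫ = (1:ℝ) := by
    rw [real_inner_self_eq_norm_sq, hσ]; norm_num
  rw [PhiMap, real_inner_smul_left, inner_add_left, real_inner_smul_left, hσσ]
  ring

lemma norm_sq_Phi (σ : E3) (hσ : ‖σ‖ = 1) (u : E3) :
    ‖PhiMap σ u‖ ^ 2 = ‖u‖ * (‖u‖ + ⟪u, σ⟫) / 2 := by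
  have h1 : ‖u + ‖u‖ • σ‖ ^ 2 = ‖u‖^2 + 2 * (‖u‖ * ⟪u, σ⟫) + ‖u‖^2 := by
    rw [norm_add_sq_real, real_inner_smul_right, norm_smul, hσ]
    simp [mul_pow, abs_of_nonneg (norm_nonneg u)]
  rw [PhiMap, norm_smul, mul_pow, h1]
  have h2 : ‖(1/2 : ℝ)‖ = 1/2 := by norm_num
  rw [h2]; ring

theorem stmt4 (σ : E3) (hσ : ‖σ‖ = 1) (δ : ℝ) (hδ : δ ∈ Set.Ioo (0 : ℝ) 2) :
    Set.BijOn (PhiMap σ) (cone σ δ) (cone σ (1 + Real.sqrt (δ / 2))) ∧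
    ContDiffOn ℝ (⊤ : ℕ∞) (PhiMap σ) (cone σ δ) ∧
    ContDiffOn ℝ (⊤ : ℕ∞) (phiInv σ) (cone σ (1 + Real.sqrt (δ / 2))) ∧
    (∀ u ∈ cone σ δ, phiInv σ (PhiMap σ u) = u) ∧
    (∀ w ∈ cone σ (1 + Real.sqrt (δ / 2)), PhiMap σ (phiInv σ w) = w) ∧
    (∀ u ∈ cone σ δ,
      (fderiv ℝ (PhiMap σ) u).det = (1 + ⟪u, σ⟫ / ‖u‖) / 8) := by
  obtain ⟨hδ0, hδ2⟩ := hδ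
  have hσσ : ⟪σ, σ⟫ = (1:ℝ) := by
    rw [real_inner_self_eq_norm_sq, hσ]; norm_num
  -- basic facts on the source cone
  have hsrc : ∀ u ∈ cone σ δ, 0 < ‖u‖ ∧ 0 < ‖u‖ + ⟪u, σ⟫ ∧ (δ - 1) * ‖u‖ < ⟪u, σ⟫ := by
    rintro u ⟨hu0, hu1⟩
    have hr : (0:ℝ) < ‖u‖ := norm_pos_iff.2 hu0
    have h2 : (δ - 1) * ‖u‖ < ⟪u, σ⟫ := by
      rw [gt_iff_lt, lt_div_iff₀ hr] at hu1; exact hu1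
    exact ⟨hr, by nlinarith, h2⟩
  -- basic facts on the target cone
  have hsq : Real.sqrt (δ / 2) ^ 2 = δ / 2 := Real.sq_sqrt (by linarith)
  have hsqrtpos : 0 < Real.sqrt (δ / 2) := Real.sqrt_pos.2 (by linarith)
  have htgt : ∀ w ∈ cone σ (1 + Real.sqrt (δ / 2)),
      0 < ‖w‖ ∧ 0 < ⟪w, σ⟫ ∧ δ / 2 * ‖w‖ ^ 2 < ⟪w, σ⟫ ^ 2 := by
    rintro w ⟨hw0, hw1⟩
    have hR : (0:ℝ) < ‖w‖ := norm_pos_iff.2 hw0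
    have h1 : Real.sqrt (δ / 2) < ⟪w, σ⟫ / ‖w‖ := by
      have := hw1; simp only [gt_iff_lt] at this; linarith
    have h2 : 0 < ⟪w, σ⟫ / ‖w‖ := lt_trans hsqrtpos h1
    have hp : 0 < ⟪w, σ⟫ := by
      have := mul_pos h2 hR; rwa [div_mul_cancel₀ _ hR.ne'] at this
    refine ⟨hR, hp, ?_⟩
    have h3 : δ / 2 < (⟪w, σ⟫ / ‖w‖) ^ 2 := by
      nlinarith [Real.sqrt_nonneg (δ / 2)]
    rw [div_pow, lt_div_iff₀ (by positivity)] at h3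
    nlinarith
  -- forward map sends cone δ into cone δ*
  have hmaps : ∀ u ∈ cone σ δ, PhiMap σ u ∈ cone σ (1 + Real.sqrt (δ / 2)) := by
    rintro u hu
    obtain ⟨hr, hrs, hds⟩ := hsrc u hu
    have hwn : ‖PhiMap σ u‖ ^ 2 = ‖u‖ * (‖u‖ + ⟪u, σ⟫) / 2 := norm_sq_Phi σ hσ u
    have hwi : ⟪PhiMap σ u, σ⟫ = (⟪u, σ⟫ + ‖u‖) / 2 := inner_Phi σ hσ u
    have hwpos : (0:ℝ) < ‖PhiMap σ u‖ := by
      have h : (0:ℝ) < ‖PhiMap σ u‖ ^ 2 := by rw [hwn]; positivity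
      nlinarith [norm_nonneg (PhiMap σ u)]
    have hw0 : PhiMap σ u ≠ 0 := norm_pos_iff.1 hwpos
    refine ⟨hw0, ?_⟩
    have hip : (0:ℝ) < ⟪PhiMap σ u, σ⟫ / ‖PhiMap σ u‖ := by
      rw [hwi]
      have : (0:ℝ) < ‖PhiMap σ u‖ := by
        have h : (0:ℝ) < ‖PhiMap σ u‖ ^ 2 := by rw [hwn]; positivity
        nlinarith [norm_nonneg (PhiMap σ u)]
      apply div_pos (by linarith) this
    rw [gt_iff_lt, show (1:ℝ) + Real.sqrt (δ / 2) - 1 = Real.sqrt (δ / 2) by ring,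
      Real.sqrt_lt' hip, div_pow, lt_div_iff₀ (by positivity), hwn, hwi]
    nlinarith
  -- left inverse
  have hleft : ∀ u ∈ cone σ δ, phiInv σ (PhiMap σ u) = u := by
    rintro u hu
    obtain ⟨hr, hrs, _⟩ := hsrc u hu
    have hwn := norm_sq_Phi σ hσ u
    have hwi := inner_Phi σ hσ u
    have hkey : ‖PhiMap σ u‖ ^ 2 / ⟪PhiMap σ u, σ⟫ = ‖u‖ := by
      rw [hwn, hwi, div_eq_iff (by linarith : ((⟪u, σ⟫ + ‖u‖) / 2 : ℝ) ≠ 0)]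
      ring
    rw [phiInv, hkey, PhiMap]
    module
  -- right inverse and membership
  have hrightmem : ∀ w ∈ cone σ (1 + Real.sqrt (δ / 2)),
      phiInv σ w ∈ cone σ δ ∧ PhiMap σ (phiInv σ w) = w := by
    rintro w hw
    obtain ⟨hR, hp, hd⟩ := htgt w hw
    set t : ℝ := ‖w‖ ^ 2 / ⟪w, σ⟫ with ht
    have htpos : 0 < t := by positivity
    have husq : ‖phiInv σ w‖ ^ 2 = t ^ 2 := by
      have hc : ⟪w, σ⟫ * t = ‖w‖ ^ 2 := by
        rw [ht, mul_comm, div_mul_cancel₀ _ hp.ne']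
      rw [phiInv, ← ht, norm_sub_sq_real, real_inner_smul_left, real_inner_smul_right,
        norm_smul, norm_smul, hσ,
        show ‖t‖ = t from by rw [Real.norm_eq_abs, abs_of_pos htpos],
        show ‖(2:ℝ)‖ = 2 from by norm_num]
      linear_combination (-4 : ℝ) * hc
    have hnu : ‖phiInv σ w‖ = t := by
      rw [← Real.sqrt_sq (norm_nonneg (phiInv σ w)), husq, Real.sqrt_sq htpos.le]
    have hu0 : phiInv σ w ≠ 0 := by
      intro h; rw [h] at hnu; simp at hnu; exact htpos.ne' hnu.symm
    have hiu : ⟪phiInv σ w, σ⟫ = 2 * ⟪w, σ⟫ - t := by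
      rw [phiInv, inner_sub_left, real_inner_smul_left, real_inner_smul_left, hσσ]
      ring
    constructor
    · refine ⟨hu0, ?_⟩
      rw [gt_iff_lt, lt_div_iff₀ (by rw [hnu]; exact htpos), hiu, hnu, ht]
      have h5 : ‖w‖ ^ 2 / ⟪w, σ⟫ * ⟪w, σ⟫ = ‖w‖ ^ 2 := div_mul_cancel₀ _ hp.ne'
      nlinarith [h5, hd, hp]
    · rw [PhiMap, hnu, phiInv]
      module
  -- smoothness of PhiMap
  have hsmooth1 : ContDiffOn ℝ (⊤ : ℕ∞) (PhiMap σ) (cone σ δ) := by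
    intro u hu
    have hu0 : u ≠ 0 := hu.1
    have h1 : ContDiffAt ℝ (⊤ : ℕ∞) (fun v : E3 => ‖v‖) u := contDiffAt_norm ℝ hu0
    exact (((contDiffAt_id.add (h1.smul contDiffAt_const)).const_smul
      ((1:ℝ)/2)) : ContDiffAt ℝ (⊤ : ℕ∞) (PhiMap σ) u).contDiffWithinAt
  -- smoothness of phiInv
  have hsmooth2 : ContDiffOn ℝ (⊤ : ℕ∞) (phiInv σ) (cone σ (1 + Real.sqrt (δ / 2))) := by
    intro w hw
    obtain ⟨hR, hp, _⟩ := htgt w hw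
    have h1 : ContDiffAt ℝ (⊤ : ℕ∞) (fun v : E3 => ‖v‖ ^ 2) w := (contDiff_norm_sq ℝ).contDiffAt
    have h2 : ContDiffAt ℝ (⊤ : ℕ∞) (fun v : E3 => ⟪v, σ⟫) w :=
      ((contDiff_id.inner ℝ contDiff_const)).contDiffAt
    have h3 : ContDiffAt ℝ (⊤ : ℕ∞) (fun v : E3 => ‖v‖ ^ 2 / ⟪v, σ⟫) w := h1.div h2 hp.ne'
    exact (((contDiffAt_const (c := (2:ℝ))).smul contDiffAt_id).sub
      (h3.smul (contDiffAt_const (c := σ))) : ContDiffAt ℝ (⊤ : ℕ∞) (phiInv σ) w).contDiffWithinAt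
  -- Jacobian determinant
  have hdet : ∀ u ∈ cone σ δ,
      (fderiv ℝ (PhiMap σ) u).det = (1 + ⟪u, σ⟫ / ‖u‖) / 8 := by
    rintro u hu
    obtain ⟨hr, -, -⟩ := hsrc u hu
    have hu0 : u ≠ 0 := hu.1
    rw [(hasFDerivAt_PhiMap σ hu0).fderiv]
    rw [ContinuousLinearMap.det]
    have hcoe : (((1 / 2 : ℝ) • (ContinuousLinearMap.id ℝ E3 +
        (innerSL ℝ ((‖u‖⁻¹ : ℝ) • u)).smulRight σ) : E3 →L[ℝ] E3) : E3 →ₗ[ℝ] E3)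
        = (1 / 2 : ℝ) • ((ContinuousLinearMap.id ℝ E3 +
        (innerSL ℝ ((‖u‖⁻¹ : ℝ) • u)).smulRight σ : E3 →L[ℝ] E3) : E3 →ₗ[ℝ] E3) := rfl
    rw [hcoe, LinearMap.det_smul, det_aux]
    have hfr : Module.finrank ℝ E3 = 3 := finrank_euclideanSpace_fin
    rw [hfr, real_inner_smul_left]
    rw [div_eq_inv_mul]
    ring
  exact ⟨⟨fun u hu => hmaps u hu,
      fun u hu v hv huv => by rw [← hleft u hu, ← hleft v hv, huv],
      fun w hw => ⟨phiInv σ w, (hrightmem w hw).1, (hrightmem w hw).2⟩⟩,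
    hsmooth1, hsmooth2, hleft, fun w hw => (hrightmem w hw).2, hdet⟩
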